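/- arXiv:1102.0021 — 3 statements merged into one kernel-verified Lean document; each statement's English description precedes it below -/
import Mathlib

section
/- Let ξ be a strictly positive random variable with G(x) := E[exp(−x/ξ)] for x ≥ 0, and let R^x denote a squared Bessel process of index −1 started at x (i.e. dR = 2√R dB, R_0 = x), independent of ξ. Then for all x ≥ 0 and s ≥ 0: E[exp(−x/(s + ξ))] = E[G(R^x(s/2))]. -/
open MeasureTheory ProbabilityTheory

/-- Representation of the Laplace transform of `(s + ξ)⁻¹` via a squared Bessel process of
dimension `0` (index `-1`) started at `x`, independent of `ξ`.  The marginal `R^x(s/2)` of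
the squared Bessel process is characterized by its Laplace transform
`E[exp(-l R^x(t))] = exp(-l x / (1 + 2 l t))`. -/
theorem laplace_repr_squared_bessel {Ω : Type*} [MeasureSpace Ω]
    [IsProbabilityMeasure (ℙ : Measure Ω)]
    (ξ : Ω → ℝ) (hξmeas : Measurable ξ) (hξpos : ∀ᵐ ω, 0 < ξ ω)
    (G : ℝ → ℝ) (hG : ∀ y : ℝ, G y = ∫ ω, Real.exp (-y / ξ ω))
    (x s : ℝ) (hx : 0 ≤ x) (hs : 0 ≤ s)
    (R : Ω → ℝ) (hRmeas : Measurable R) (hRpos : ∀ᵐ ω, 0 ≤ R ω)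
    (hRlaw : ∀ l : ℝ, 0 ≤ l →
      ∫ ω, Real.exp (-l * R ω) = Real.exp (-l * x / (1 + 2 * l * (s / 2))))
    (hindep : IndepFun R ξ ℙ) :
    ∫ ω, Real.exp (-x / (s + ξ ω)) = ∫ ω, G (R ω) := by
  have hmeas : Measurable fun p : Ω × Ω => Real.exp (-R p.1 / ξ p.2) :=
    (((hRmeas.comp measurable_fst).neg).div (hξmeas.comp measurable_snd)).exp
  have hR' : ∀ᵐ p : Ω × Ω ∂((ℙ : Measure Ω).prod ℙ), 0 ≤ R p.1 :=
    (Measure.quasiMeasurePreserving_fst (μ := (ℙ : Measure Ω)) (ν := ℙ)).ae hRpos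
  have hξ' : ∀ᵐ p : Ω × Ω ∂((ℙ : Measure Ω).prod ℙ), 0 < ξ p.2 :=
    (Measure.quasiMeasurePreserving_snd (μ := (ℙ : Measure Ω)) (ν := ℙ)).ae hξpos
  have hint : Integrable (fun p : Ω × Ω => Real.exp (-R p.1 / ξ p.2)) ((ℙ : Measure Ω).prod ℙ) := by
    refine (integrable_const (1 : ℝ)).mono' hmeas.aestronglyMeasurable ?_
    filter_upwards [hR', hξ'] with p h1 h2
    rw [Real.norm_eq_abs, abs_of_pos (Real.exp_pos _)]
    exact Real.exp_le_one_iff.2 (div_nonpos_of_nonpos_of_nonneg (neg_nonpos.2 h1) h2.le)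
  have hswap := integral_integral_swap (μ := (ℙ : Measure Ω)) (ν := (ℙ : Measure Ω))
    (f := fun ω ω' => Real.exp (-R ω / ξ ω')) hint
  calc ∫ ω, Real.exp (-x / (s + ξ ω))
      = ∫ ω', ∫ ω, Real.exp (-R ω / ξ ω') := by
        refine (integral_congr_ae ?_).symm
        filter_upwards [hξpos] with ω' hc
        have hcne : ξ ω' ≠ 0 := ne_of_gt hc
        have hl : (0 : ℝ) ≤ (ξ ω')⁻¹ := inv_nonneg.2 hc.le
        have hsum : s + ξ ω' ≠ 0 := ne_of_gt (by linarith)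
        have : ∫ ω, Real.exp (-R ω / ξ ω') = ∫ ω, Real.exp (-(ξ ω')⁻¹ * R ω) := by
          refine integral_congr_ae (Filter.Eventually.of_forall fun ω => ?_)
          show Real.exp (-R ω / ξ ω') = Real.exp (-(ξ ω')⁻¹ * R ω)
          rw [neg_div, div_eq_inv_mul, ← neg_mul]
        rw [this, hRlaw _ hl]
        have harg : -(ξ ω')⁻¹ * x / (1 + 2 * (ξ ω')⁻¹ * (s / 2)) = -x / (s + ξ ω') := by
          field_simp
          ring
        rw [harg]
    _ = ∫ ω, ∫ ω', Real.exp (-R ω / ξ ω') := hswap.symm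
    _ = ∫ ω, G (R ω) := by
        refine integral_congr_ae (Filter.Eventually.of_forall fun ω => ?_)
        show (∫ ω', Real.exp (-R ω / ξ ω')) = G (R ω)
        rw [hG]
end

section
/- Let ξ be a strictly positive random variable with E[ξ] < ∞, and G(y) = E[exp(−y/ξ)]. Then for all β ≥ 0: E[ln(1 + βξ)] = ∫₀^∞ (G(y)/y)(1 − e^{−yβ}) dy. -/
open MeasureTheory ProbabilityTheory Set

lemma aux_interval_exp (y a b : ℝ) (hy : 0 < y) :
    ∫ t in a..b, Real.exp (-(t * y)) =
      (Real.exp (-(a * y)) - Real.exp (-(b * y))) / y := by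
  have h : ∀ t ∈ Set.uIcc a b,
      HasDerivAt (fun t => -Real.exp (-(t * y)) / y) (Real.exp (-(t * y))) t := by
    intro t _
    have h1 : HasDerivAt (fun t : ℝ => -(t * y)) (-y) t := by
      simpa [Pi.neg_def] using ((hasDerivAt_id t).mul_const y).neg
    have h2 := h1.exp.neg.div_const y
    convert h2 using 1
    · rfl
    · rfl
    · rfl
    · field_simp
  rw [intervalIntegral.integral_eq_sub_of_hasDerivAt h
    (Continuous.intervalIntegrable (by continuity) _ _)]
  ring

lemma aux_Ioi_exp {t : ℝ} (ht : 0 < t) :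
    ∫ y in Set.Ioi (0 : ℝ), Real.exp (-(t * y)) = t⁻¹ := by
  have h := MeasureTheory.integral_comp_mul_left_Ioi (fun s => Real.exp (-s)) 0 ht
  simp only [mul_zero, integral_exp_neg_Ioi, neg_zero, Real.exp_zero, smul_eq_mul,
    mul_one] at h
  simpa using h

lemma frullani_aux {a c : ℝ} (ha : 0 < a) (hc : 0 ≤ c) :
    IntegrableOn (fun y => (Real.exp (-(a * y)) - Real.exp (-((a + c) * y))) / y)
      (Set.Ioi 0) ∧
    ∫ y in Set.Ioi (0 : ℝ), (Real.exp (-(a * y)) - Real.exp (-((a + c) * y))) / y =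
      Real.log ((a + c) / a) := by
  set μ := volume.restrict (Set.Ioc a (a + c)) with hμ
  set ν := volume.restrict (Set.Ioi (0 : ℝ)) with hν
  have hab : a ≤ a + c := by linarith
  have hmeasF : AEStronglyMeasurable (fun p : ℝ × ℝ => Real.exp (-(p.1 * p.2))) (μ.prod ν) :=
    ((continuous_fst.mul continuous_snd).neg.rexp).aestronglyMeasurable
  -- integrability of F on the product
  have hF : Integrable (fun p : ℝ × ℝ => Real.exp (-(p.1 * p.2))) (μ.prod ν) := by
    rw [MeasureTheory.integrable_prod_iff hmeasF]
    constructor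
    · filter_upwards [ae_restrict_mem measurableSet_Ioc] with t ht
      have ht0 : 0 < t := ha.trans ht.1
      have := exp_neg_integrableOn_Ioi 0 ht0
      exact (by simpa [neg_mul] using this : IntegrableOn (fun y => Real.exp (-(t * y))) (Ioi 0))
    · have hcongr : ∀ᵐ t ∂μ,
          (∫ y, ‖Real.exp (-(t * y))‖ ∂ν) = t⁻¹ := by
        filter_upwards [ae_restrict_mem measurableSet_Ioc] with t ht
        have ht0 : 0 < t := ha.trans ht.1
        rw [show (fun y => ‖Real.exp (-(t * y))‖) = fun y => Real.exp (-(t * y)) by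
          funext y; exact Real.norm_of_nonneg (Real.exp_pos _).le]
        exact aux_Ioi_exp ht0
      have hinv : Integrable (fun t : ℝ => t⁻¹) μ := by
        refine (intervalIntegral.intervalIntegrable_inv (f := fun x : ℝ => x) (a := a)
          (b := a + c) (μ := volume) (fun x hx => ?_) continuousOn_id).1
        rw [Set.uIcc_of_le hab] at hx
        exact (ha.trans_le hx.1).ne'
      refine hinv.congr ?_
      filter_upwards [hcongr] with t h
      exact h.symm
  constructor
  · -- integrability of the y-integral
    have h1 := hF.integral_prod_right
    refine h1.congr ?_
    filter_upwards [ae_restrict_mem measurableSet_Ioi] with y hy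
    have hy0 : (0 : ℝ) < y := hy
    rw [hμ, ← intervalIntegral.integral_of_le hab, aux_interval_exp y a (a + c) hy0]
  · -- value via Fubini
    have hswap := MeasureTheory.integral_integral_swap
      (f := fun t y => Real.exp (-(t * y))) hF
    have hL : (∫ t, ∫ y, Real.exp (-(t * y)) ∂ν ∂μ) = Real.log ((a + c) / a) := by
      have h2 : (∫ t, ∫ y, Real.exp (-(t * y)) ∂ν ∂μ) = ∫ t, t⁻¹ ∂μ := by
        refine integral_congr_ae ?_
        filter_upwards [ae_restrict_mem measurableSet_Ioc] with t ht
        exact aux_Ioi_exp (ha.trans ht.1)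
      rw [h2, hμ, ← intervalIntegral.integral_of_le hab]
      exact integral_inv (by
        rw [Set.uIcc_of_le hab]
        intro h0
        exact absurd h0.1 (not_le.mpr ha))
    have hR : (∫ y, ∫ t, Real.exp (-(t * y)) ∂μ ∂ν) =
        ∫ y in Set.Ioi (0 : ℝ), (Real.exp (-(a * y)) - Real.exp (-((a + c) * y))) / y := by
      refine integral_congr_ae ?_
      filter_upwards [ae_restrict_mem measurableSet_Ioi] with y hy
      have hy0 : (0 : ℝ) < y := hy
      rw [hμ, ← intervalIntegral.integral_of_le hab, aux_interval_exp y a (a + c) hy0]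
    rw [← hR, ← hswap, hL]

theorem expectation_log_repr {Ω : Type*} [MeasureSpace Ω]
    [IsProbabilityMeasure (ℙ : Measure Ω)]
    (ξ : Ω → ℝ) (hmeas : Measurable ξ) (hpos : ∀ᵐ ω, 0 < ξ ω) (hint : Integrable ξ)
    (β : ℝ) (hβ : 0 ≤ β) :
    ∫ ω, Real.log (1 + β * ξ ω) =
      ∫ y in Set.Ioi (0 : ℝ),
        ((∫ ω, Real.exp (-y / ξ ω)) / y) * (1 - Real.exp (-y * β)) := by
  set ν := volume.restrict (Set.Ioi (0 : ℝ)) with hν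
  set H : Ω → ℝ → ℝ := fun ω y => Real.exp (-y / ξ ω) * ((1 - Real.exp (-y * β)) / y)
    with hH
  -- pointwise rewriting
  have hpt : ∀ x : ℝ, 0 < x → ∀ y : ℝ, 0 < y →
      (Real.exp (-(x⁻¹ * y)) - Real.exp (-((x⁻¹ + β) * y))) / y =
        Real.exp (-y / x) * ((1 - Real.exp (-y * β)) / y) := by
    intro x hx y hy
    rw [show -((x⁻¹ + β) * y) = -(x⁻¹ * y) + -(y * β) by ring, Real.exp_add,
      show -y / x = -(x⁻¹ * y) by field_simp]
    ring
  -- per-ω facts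
  have hIω : ∀ᵐ ω, IntegrableOn (fun y => H ω y) (Set.Ioi 0) := by
    filter_upwards [hpos] with ω hx
    have h1 := (frullani_aux (a := (ξ ω)⁻¹) (inv_pos.mpr hx) hβ).1
    refine h1.congr ?_
    filter_upwards [ae_restrict_mem measurableSet_Ioi] with y hy
    exact hpt (ξ ω) hx y hy
  have hvalω : ∀ᵐ ω, (∫ y, H ω y ∂ν) = Real.log (1 + β * ξ ω) := by
    filter_upwards [hpos] with ω hx
    have h2 := (frullani_aux (a := (ξ ω)⁻¹) (inv_pos.mpr hx) hβ).2
    have h3 : (∫ y, H ω y ∂ν) =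
        ∫ y in Set.Ioi (0 : ℝ),
          (Real.exp (-((ξ ω)⁻¹ * y)) - Real.exp (-(((ξ ω)⁻¹ + β) * y))) / y := by
      refine integral_congr_ae ?_
      filter_upwards [ae_restrict_mem measurableSet_Ioi] with y hy
      exact (hpt (ξ ω) hx y hy).symm
    rw [h3, h2]
    congr 1
    field_simp
  -- nonnegativity on Ioi 0
  have hHnn : ∀ ω : Ω, ∀ y : ℝ, 0 < y → 0 ≤ H ω y := by
    intro ω y hy
    have h1 : Real.exp (-y * β) ≤ 1 := by
      rw [← Real.exp_zero]
      exact Real.exp_le_exp.mpr (by nlinarith)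
    exact mul_nonneg (Real.exp_pos _).le (div_nonneg (by linarith) hy.le)
  -- integrability of log (1 + β ξ)
  have hlogint : Integrable (fun ω => Real.log (1 + β * ξ ω)) := by
    refine Integrable.mono' (hint.const_mul β) ?_ ?_
    · exact (Real.measurable_log.comp
        (measurable_const.add (hmeas.const_mul β))).aestronglyMeasurable
    · filter_upwards [hpos] with ω hx
      have h1 : (0 : ℝ) < 1 + β * ξ ω := by nlinarith
      have h2 : Real.log (1 + β * ξ ω) ≤ β * ξ ω := by
        have := Real.log_le_sub_one_of_pos h1
        linarith
      have h3 : 0 ≤ Real.log (1 + β * ξ ω) :=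
        Real.log_nonneg (by nlinarith)
      rw [Real.norm_of_nonneg h3]
      exact h2
  -- integrability on the product
  have hHmeas : AEStronglyMeasurable (Function.uncurry H) ((ℙ : Measure Ω).prod ν) := by
    have hm : Measurable (fun p : Ω × ℝ =>
        Real.exp (-p.2 / ξ p.1) * ((1 - Real.exp (-p.2 * β)) / p.2)) :=
      ((measurable_snd.neg.div (hmeas.comp measurable_fst)).exp).mul
        ((measurable_const.sub (measurable_snd.neg.mul_const β).exp).div measurable_snd)
    exact hm.aestronglyMeasurable
  have hHint : Integrable (Function.uncurry H) ((ℙ : Measure Ω).prod ν) := by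
    rw [MeasureTheory.integrable_prod_iff hHmeas]
    refine ⟨?_, ?_⟩
    · filter_upwards [hIω] with ω h
      exact h
    · have hcongr : (fun ω => ∫ y, ‖Function.uncurry H (ω, y)‖ ∂ν) =ᵐ[ℙ]
          (fun ω => Real.log (1 + β * ξ ω)) := by
        filter_upwards [hvalω] with ω hv
        have : (∫ y, ‖H ω y‖ ∂ν) = ∫ y, H ω y ∂ν := by
          refine integral_congr_ae ?_
          filter_upwards [ae_restrict_mem measurableSet_Ioi] with y hy
          exact Real.norm_of_nonneg (hHnn ω y hy)
        exact this.trans hv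
      exact hlogint.congr hcongr.symm
  -- Fubini and conclusion
  have hswap := MeasureTheory.integral_integral_swap (f := H) hHint
  calc ∫ ω, Real.log (1 + β * ξ ω)
      = ∫ ω, ∫ y, H ω y ∂ν := by
        refine integral_congr_ae ?_
        filter_upwards [hvalω] with ω hv
        exact hv.symm
    _ = ∫ y, (∫ ω, H ω y) ∂ν := hswap
    _ = ∫ y in Set.Ioi (0 : ℝ),
          ((∫ ω, Real.exp (-y / ξ ω)) / y) * (1 - Real.exp (-y * β)) := by
        refine integral_congr_ae (Filter.Eventually.of_forall fun y => ?_)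
        show (∫ ω, Real.exp (-y / ξ ω) * ((1 - Real.exp (-y * β)) / y)) =
          ((∫ ω, Real.exp (-y / ξ ω)) / y) * (1 - Real.exp (-y * β))
        rw [MeasureTheory.integral_mul_const]
        ring
end

section
/- For every a > 0 and β ≥ 0, ln(1 + βa) = ∫₀^∞ (1/y) e^{−y/a} (1 − e^{−βy}) dy. -/
set_option maxHeartbeats 1000000

open MeasureTheory

open Real Set in
private lemma exp_neg_mul_integral_Ioi {c : ℝ} (hc : 0 < c) :
    ∫ y in Set.Ioi (0 : ℝ), Real.exp (-(c * y)) = 1 / c := by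
  have h := integral_comp_mul_left_Ioi (fun x => Real.exp (-x)) 0 hc
  simp only [mul_zero, integral_exp_neg_Ioi, neg_zero, Real.exp_zero, smul_eq_mul, mul_one] at h
  rw [h, one_div]

open Real Set in
private lemma one_sub_exp_neg_le {t : ℝ} : 1 - Real.exp (-t) ≤ t := by
  have := Real.add_one_le_exp (-t)
  linarith

open Real Set in
private lemma frullani_integrable {a : ℝ} (ha : 0 < a) {b : ℝ} (hb : 0 ≤ b) :
    Integrable (fun y => (1 / y) * Real.exp (-y / a) * (1 - Real.exp (-b * y)))
      (volume.restrict (Set.Ioi (0 : ℝ))) := by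
  have hint : Integrable (fun y => b * Real.exp (-(1 / a) * y))
      (volume.restrict (Set.Ioi (0 : ℝ))) :=
    (exp_neg_integrableOn_Ioi 0 (by positivity : (0:ℝ) < 1 / a)).const_mul b
  refine hint.mono ?_ ?_
  · apply Measurable.aestronglyMeasurable
    fun_prop
  · filter_upwards [ae_restrict_mem measurableSet_Ioi] with y hy
    have hy0 : (0:ℝ) < y := hy
    have h1 : 0 ≤ 1 - Real.exp (-b * y) := by
      have : Real.exp (-b * y) ≤ 1 := Real.exp_le_one_iff.mpr (by nlinarith)
      linarith
    have h2 : 1 - Real.exp (-b * y) ≤ b * y := by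
      simpa [neg_mul] using one_sub_exp_neg_le (t := b * y)
    rw [Real.norm_eq_abs, Real.norm_eq_abs, abs_of_nonneg (by positivity),
      abs_of_nonneg (by positivity)]
    calc (1 / y) * Real.exp (-y / a) * (1 - Real.exp (-b * y))
        ≤ (1 / y) * Real.exp (-y / a) * (b * y) := by gcongr
      _ = b * Real.exp (-(1 / a) * y) := by
          rw [show -y / a = -(1 / a) * y by ring]
          field_simp

theorem frullani_log (a β : ℝ) (ha : 0 < a) (hβ : 0 ≤ β) :
    Real.log (1 + β * a) =
      ∫ y in Set.Ioi (0 : ℝ), (1 / y) * Real.exp (-y / a) * (1 - Real.exp (-β * y)) := by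
  set F : ℝ → ℝ := fun b => ∫ y in Set.Ioi (0 : ℝ),
    (1 / y) * Real.exp (-y / a) * (1 - Real.exp (-b * y)) with hF
  -- derivative of F
  have key : ∀ t ∈ Set.uIcc 0 β, HasDerivAt F (a / (1 + t * a)) t := by
    intro t ht
    rw [Set.uIcc_of_le hβ] at ht
    have ht0 : 0 ≤ t := ht.1
    have hε : (0:ℝ) < 1 / (2 * a) := by positivity
    have hbound : ∀ᵐ y ∂(volume.restrict (Set.Ioi (0:ℝ))), ∀ x ∈ Metric.ball t (1 / (2 * a)),
        ‖Real.exp (-y / a) * Real.exp (-x * y)‖ ≤ Real.exp (-(1 / (2 * a)) * y) := by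
      filter_upwards [ae_restrict_mem measurableSet_Ioi] with y hy
      intro x hx
      have hy0 : (0:ℝ) < y := hy
      have h2 : |x - t| < 1 / (2 * a) := by
        simpa [Real.dist_eq] using Metric.mem_ball.mp hx
      have hxlb : -(1 / (2 * a)) < x := by
        have := (abs_lt.mp h2).1
        linarith
      rw [Real.norm_eq_abs, abs_of_nonneg (by positivity), ← Real.exp_add]
      apply Real.exp_le_exp.mpr
      rw [div_eq_mul_inv]
      have hc2 : y * a⁻¹ = (1 / (2 * a)) * y + (1 / (2 * a)) * y := by
        field_simp
        ring
      have h5 : -x * y ≤ (1 / (2 * a)) * y :=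
        mul_le_mul_of_nonneg_right (by linarith : -x ≤ 1 / (2 * a)) hy0.le
      linarith [hc2, h5]
    have hdiff : ∀ᵐ y ∂(volume.restrict (Set.Ioi (0:ℝ))), ∀ x ∈ Metric.ball t (1 / (2 * a)),
        HasDerivAt (fun b => (1 / y) * Real.exp (-y / a) * (1 - Real.exp (-b * y)))
          (Real.exp (-y / a) * Real.exp (-x * y)) x := by
      filter_upwards [ae_restrict_mem measurableSet_Ioi] with y hy
      intro x hx
      have hy0 : (0:ℝ) < y := hy
      have h1 : HasDerivAt (fun x : ℝ => -x * y) (-y) x := by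
        simpa using ((hasDerivAt_id x).neg.mul_const y)
      have h2 : HasDerivAt (fun x : ℝ => Real.exp (-x * y)) (Real.exp (-x * y) * (-y)) x :=
        h1.exp
      have h3 : HasDerivAt (fun x : ℝ => 1 - Real.exp (-x * y)) (y * Real.exp (-x * y)) x := by
        have := h2.const_sub 1
        simpa [mul_comm] using this
      have h4 := h3.const_mul ((1 / y) * Real.exp (-y / a))
      exact h4.congr_deriv (by rw [one_div, mul_mul_mul_comm, inv_mul_cancel₀ hy0.ne', one_mul])
    have hd := hasDerivAt_integral_of_dominated_loc_of_deriv_le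
      (μ := volume.restrict (Set.Ioi (0:ℝ)))
      (F := fun b y => (1 / y) * Real.exp (-y / a) * (1 - Real.exp (-b * y)))
      (F' := fun b y => Real.exp (-y / a) * Real.exp (-b * y))
      (bound := fun y => Real.exp (-(1 / (2 * a)) * y))
      (x₀ := t) (Metric.ball_mem_nhds t hε)
      (Filter.Eventually.of_forall fun x => by
        apply Measurable.aestronglyMeasurable; fun_prop)
      (frullani_integrable ha ht0)
      (by apply Measurable.aestronglyMeasurable; fun_prop)
      hbound (exp_neg_integrableOn_Ioi 0 hε)
      hdiff
    have hval : (∫ y in Set.Ioi (0:ℝ), Real.exp (-y / a) * Real.exp (-t * y))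
        = a / (1 + t * a) := by
      have hc : (0:ℝ) < 1 / a + t := by positivity
      have heq : ∀ y : ℝ, Real.exp (-y / a) * Real.exp (-t * y)
          = Real.exp (-((1 / a + t) * y)) := by
        intro y
        rw [← Real.exp_add]
        congr 1
        field_simp
        ring
      rw [show (fun y => Real.exp (-y / a) * Real.exp (-t * y))
          = fun y => Real.exp (-((1 / a + t) * y)) from funext heq]
      rw [exp_neg_mul_integral_Ioi hc]
      rw [div_eq_div_iff (by positivity) (by positivity)]
      field_simp
    rw [← hval]
    exact hd.2
  -- derivative of log side
  have key2 : ∀ t ∈ Set.uIcc 0 β, HasDerivAt (fun t => Real.log (1 + t * a))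
      (a / (1 + t * a)) t := by
    intro t ht
    rw [Set.uIcc_of_le hβ] at ht
    have hpos : 0 < 1 + t * a := by nlinarith [ht.1]
    have h1 : HasDerivAt (fun t : ℝ => 1 + t * a) a t := by
      simpa using ((hasDerivAt_id t).mul_const a).const_add 1
    exact h1.log hpos.ne'
  have hint : IntervalIntegrable (fun t => a / (1 + t * a)) volume 0 β := by
    apply ContinuousOn.intervalIntegrable
    apply continuousOn_const.div (by fun_prop)
    intro t ht
    rw [Set.uIcc_of_le hβ] at ht
    nlinarith [ht.1]
  have e1 := intervalIntegral.integral_eq_sub_of_hasDerivAt key2 hint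
  have e2 := intervalIntegral.integral_eq_sub_of_hasDerivAt key hint
  have hF0 : F 0 = 0 := by
    simp [hF]
  rw [e2, hF0, sub_zero] at e1
  have : Real.log (1 + 0 * a) = 0 := by norm_num
  rw [this, sub_zero] at e1
  exact e1.symm
end
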